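/- arXiv:2310.06449 — 3 statements merged into one kernel-verified Lean document; each statement's English description precedes it below -/
import Mathlib

section
/- Let ρm > 0, f = ρm − ρ̄ with 0 < ρ̄ < ρm, and a, b, c ∈ ℝ with a ≠ 0. The functions ψ(x,y,t) = A cos(ax + by + ct), φ(x,y,t) = B sin(ax + by + ct) solve the linear system ∂t ψ = (f − 2ρ̄)∂x ψ + ρ̄ f² Δφ and ∂t φ = f ∂x φ − (1/f)ψ on ℝ² × ℝ for some real A, B not both zero if and only if c satisfies −c² + 2a(f − ρ̄)c − a² f (f − ρ̄) − b² ρ̄ f = 0, and moreover in that case A, B can be chosen with AB ≠ 0. -/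
lemma deriv_cos_lin (A p q s r : ℝ) (hr : p*s + q = r) :
    deriv (fun u => A * Real.cos (p*u + q)) s = -(A * p * Real.sin r) := by
  have h : HasDerivAt (fun u => p*u + q) p s := by
    simpa using ((hasDerivAt_id s).const_mul p).add_const q
  have h2 := ((Real.hasDerivAt_cos (p*s+q)).comp s h).const_mul A
  simp only [Function.comp] at h2
  rw [h2.deriv, hr]; ring

lemma deriv_sin_lin (B p q s r : ℝ) (hr : p*s + q = r) :
    deriv (fun u => B * Real.sin (p*u + q)) s = B * p * Real.cos r := by
  have h : HasDerivAt (fun u => p*u + q) p s := by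
    simpa using ((hasDerivAt_id s).const_mul p).add_const q
  have h2 := ((Real.hasDerivAt_sin (p*s+q)).comp s h).const_mul B
  simp only [Function.comp] at h2
  rw [h2.deriv, hr]; ring

/-- Planar-wave ansatz for the linearized `β = 2` system: a nontrivial planar wave
exists iff `c` satisfies the dispersion quadratic, in which case `A, B` may be
chosen with `AB ≠ 0`. -/
theorem planar_wave_dispersion (ρm ρb a b c : ℝ) (hρm : 0 < ρm)
    (hρb0 : 0 < ρb) (hρbm : ρb < ρm) (f : ℝ) (hf : f = ρm - ρb) (ha : a ≠ 0) :
    let solves : ℝ → ℝ → Prop := fun A B => ∀ x y t : ℝ,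
      (deriv (fun t' => A * Real.cos (a*x + b*y + c*t')) t
        = (f - 2*ρb) * deriv (fun x' => A * Real.cos (a*x' + b*y + c*t)) x
          + ρb * f^2 *
            (deriv (fun x' => deriv (fun x'' => B * Real.sin (a*x'' + b*y + c*t)) x') x
             + deriv (fun y' => deriv (fun y'' => B * Real.sin (a*x + b*y'' + c*t)) y') y))
      ∧ (deriv (fun t' => B * Real.sin (a*x + b*y + c*t')) t
        = f * deriv (fun x' => B * Real.sin (a*x' + b*y + c*t)) x
          - (1/f) * (A * Real.cos (a*x + b*y + c*t)))
    ((∃ A B : ℝ, ¬(A = 0 ∧ B = 0) ∧ solves A B)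
        ↔ -c^2 + 2*a*(f - ρb)*c - a^2 * f * (f - ρb) - b^2 * ρb * f = 0)
    ∧ (-c^2 + 2*a*(f - ρb)*c - a^2 * f * (f - ρb) - b^2 * ρb * f = 0
        → ∃ A B : ℝ, A * B ≠ 0 ∧ solves A B) := by
  intro solves
  have hf0 : f ≠ 0 := by rw [hf]; intro h; linarith
  -- rewrite all the derivatives
  have d1 : ∀ A x y t : ℝ, deriv (fun t' => A * Real.cos (a*x + b*y + c*t')) t
      = -(A * c * Real.sin (a*x + b*y + c*t)) := by
    intro A x y t
    rw [show (fun t' => A * Real.cos (a*x + b*y + c*t'))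
        = (fun t' => A * Real.cos (c*t' + (a*x + b*y))) from funext fun _ => by ring_nf]
    exact deriv_cos_lin A c (a*x+b*y) t _ (by ring)
  have d2 : ∀ A x y t : ℝ, deriv (fun x' => A * Real.cos (a*x' + b*y + c*t)) x
      = -(A * a * Real.sin (a*x + b*y + c*t)) := by
    intro A x y t
    rw [show (fun x' => A * Real.cos (a*x' + b*y + c*t))
        = (fun x' => A * Real.cos (a*x' + (b*y + c*t))) from funext fun _ => by ring_nf]
    exact deriv_cos_lin A a (b*y+c*t) x _ (by ring)
  have d3 : ∀ B x y t : ℝ,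
      deriv (fun x' => deriv (fun x'' => B * Real.sin (a*x'' + b*y + c*t)) x') x
        = -(B * a * a * Real.sin (a*x + b*y + c*t)) := by
    intro B x y t
    have inner : (fun x' => deriv (fun x'' => B * Real.sin (a*x'' + b*y + c*t)) x')
        = (fun x' => (B*a) * Real.cos (a*x' + (b*y + c*t))) := by
      funext x'
      rw [show (fun x'' => B * Real.sin (a*x'' + b*y + c*t))
          = (fun x'' => B * Real.sin (a*x'' + (b*y + c*t))) from funext fun _ => by ring_nf]
      exact deriv_sin_lin B a (b*y+c*t) x' _ rfl
    rw [inner]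
    have := deriv_cos_lin (B*a) a (b*y+c*t) x (a*x + b*y + c*t) (by ring)
    rw [this]
  have d4 : ∀ B x y t : ℝ,
      deriv (fun y' => deriv (fun y'' => B * Real.sin (a*x + b*y'' + c*t)) y') y
        = -(B * b * b * Real.sin (a*x + b*y + c*t)) := by
    intro B x y t
    have inner : (fun y' => deriv (fun y'' => B * Real.sin (a*x + b*y'' + c*t)) y')
        = (fun y' => (B*b) * Real.cos (b*y' + (a*x + c*t))) := by
      funext y'
      rw [show (fun y'' => B * Real.sin (a*x + b*y'' + c*t))
          = (fun y'' => B * Real.sin (b*y'' + (a*x + c*t))) from funext fun _ => by ring_nf]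
      exact deriv_sin_lin B b (a*x+c*t) y' _ rfl
    rw [inner]
    have := deriv_cos_lin (B*b) b (a*x+c*t) y (a*x + b*y + c*t) (by ring)
    rw [this]
  have d5 : ∀ B x y t : ℝ, deriv (fun t' => B * Real.sin (a*x + b*y + c*t')) t
      = B * c * Real.cos (a*x + b*y + c*t) := by
    intro B x y t
    rw [show (fun t' => B * Real.sin (a*x + b*y + c*t'))
        = (fun t' => B * Real.sin (c*t' + (a*x + b*y))) from funext fun _ => by ring_nf]
    exact deriv_sin_lin B c (a*x+b*y) t _ (by ring)
  have d6 : ∀ B x y t : ℝ, deriv (fun x' => B * Real.sin (a*x' + b*y + c*t)) x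
      = B * a * Real.cos (a*x + b*y + c*t) := by
    intro B x y t
    rw [show (fun x' => B * Real.sin (a*x' + b*y + c*t))
        = (fun x' => B * Real.sin (a*x' + (b*y + c*t))) from funext fun _ => by ring_nf]
    exact deriv_sin_lin B a (b*y+c*t) x _ (by ring)
  have hchar : ∀ A B : ℝ, solves A B ↔
      (A*c = (f - 2*ρb)*(A*a) + ρb*f^2*(a^2 + b^2)*B ∧ f*B*c = f^2*a*B - A) := by
    intro A B
    constructor
    · intro h
      constructor
      · have h1 := (h (Real.pi/(2*a)) 0 0).1
        rw [d1, d2, d3, d4] at h1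
        have hθ : a*(Real.pi/(2*a)) + b*0 + c*0 = Real.pi/2 := by
          field_simp; ring
        rw [hθ, Real.sin_pi_div_two] at h1
        linear_combination -h1
      · have h2 := (h 0 0 0).2
        rw [d5, d6] at h2
        have hθ : a*0 + b*0 + c*0 = 0 := by ring
        rw [hθ, Real.cos_zero] at h2
        field_simp at h2
        linear_combination h2
    · rintro ⟨hE1, hE2⟩ x y t
      constructor
      · rw [d1, d2, d3, d4]
        linear_combination (-(Real.sin (a*x + b*y + c*t))) * hE1
      · rw [d5, d6]
        have hA : A = f^2*a*B - f*B*c := by linarith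
        rw [hA]; field_simp; ring
  have hfapos : 0 < f := by rw [hf]; linarith
  have ha2 : 0 < a^2 := by positivity
  have key2 : (-c^2 + 2*a*(f - ρb)*c - a^2 * f * (f - ρb) - b^2 * ρb * f = 0)
      → ∃ A B : ℝ, A * B ≠ 0 ∧ solves A B := by
    intro hq
    have hfa : f*a - c ≠ 0 := by
      intro hc
      have h0 : ρb*f*(a^2 + b^2) = 0 := by
        linear_combination (c - a*(f - 2*ρb))*hc - hq
      have hab : 0 < a^2 + b^2 := by nlinarith [sq_nonneg b]
      have := mul_pos (mul_pos hρb0 hfapos) hab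
      linarith
    refine ⟨f*(f*a - c), 1, mul_ne_zero (mul_ne_zero hf0 hfa) one_ne_zero, ?_⟩
    exact (hchar _ _).mpr ⟨by linear_combination f*hq, by ring⟩
  constructor
  · constructor
    · rintro ⟨A, B, hAB, hs⟩
      obtain ⟨hE1, hE2⟩ := (hchar A B).mp hs
      have hB : B ≠ 0 := by
        rintro rfl
        simp only [mul_zero, zero_mul] at hE2
        exact hAB ⟨by linarith, rfl⟩
      have h0 : (B*f) * (-c^2 + 2*a*(f - ρb)*c - a^2 * f * (f - ρb) - b^2 * ρb * f) = 0 := by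
        linear_combination hE1 - (c - a*(f - 2*ρb)) * hE2
      rcases mul_eq_zero.mp h0 with h | h
      · exact absurd h (mul_ne_zero hB hf0)
      · exact h
    · intro hq
      obtain ⟨A, B, hAB, hs⟩ := key2 hq
      exact ⟨A, B, fun ⟨h1, h2⟩ => hAB (by rw [h1, h2]; ring), hs⟩
  · exact key2
end

section
/- Let ρm > 0, 0 < ρ̄ < ρm, f = ρm − ρ̄, and a, b ∈ ℝ with (a,b) ≠ (0,0). Then the quadratic equation in c arising from the planar-wave ansatz for the β = 0 linearized system, namely (c − fa)² = (a² + b²) ρ̄ f, always has a real solution c, and consequently there exist A, B ∈ ℝ with AB ≠ 0 and c ∈ ℝ such that ψ = A cos(ax + by + ct), φ = B sin(ax + by + ct) solve ∂t ψ = f ∂x ψ + ρ̄ Δφ and ∂t φ = f ∂x φ + f ψ on ℝ² × ℝ. -/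
private lemma hd_aff_last (m k x : ℝ) : HasDerivAt (fun u : ℝ => k + m*u) m x := by
  simpa using ((hasDerivAt_id x).const_mul m).const_add k

private lemma hd_aff_first (m k1 k2 x : ℝ) :
    HasDerivAt (fun u : ℝ => m*u + k1 + k2) m x := by
  simpa using (((hasDerivAt_id x).const_mul m).add_const k1).add_const k2

private lemma hd_aff_mid (m k1 k2 x : ℝ) :
    HasDerivAt (fun u : ℝ => k1 + m*u + k2) m x := by
  simpa using (((hasDerivAt_id x).const_mul m).const_add k1).add_const k2

private lemma dcos_last (C m k x : ℝ) :
    deriv (fun u => C * Real.cos (k + m*u)) x = -(C * m * Real.sin (k + m*x)) := by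
  rw [(((hd_aff_last m k x).cos).const_mul C).deriv]; ring

private lemma dsin_last (C m k x : ℝ) :
    deriv (fun u => C * Real.sin (k + m*u)) x = C * m * Real.cos (k + m*x) := by
  rw [(((hd_aff_last m k x).sin).const_mul C).deriv]; ring

private lemma dcos_first (C m k1 k2 x : ℝ) :
    deriv (fun u => C * Real.cos (m*u + k1 + k2)) x
      = -(C * m * Real.sin (m*x + k1 + k2)) := by
  rw [(((hd_aff_first m k1 k2 x).cos).const_mul C).deriv]; ring

private lemma dsin_first (C m k1 k2 x : ℝ) :
    deriv (fun u => C * Real.sin (m*u + k1 + k2)) x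
      = C * m * Real.cos (m*x + k1 + k2) := by
  rw [(((hd_aff_first m k1 k2 x).sin).const_mul C).deriv]; ring

private lemma dcos_mid (C m k1 k2 x : ℝ) :
    deriv (fun u => C * Real.cos (k1 + m*u + k2)) x
      = -(C * m * Real.sin (k1 + m*x + k2)) := by
  rw [(((hd_aff_mid m k1 k2 x).cos).const_mul C).deriv]; ring

private lemma dsin_mid (C m k1 k2 x : ℝ) :
    deriv (fun u => C * Real.sin (k1 + m*u + k2)) x
      = C * m * Real.cos (k1 + m*x + k2) := by
  rw [(((hd_aff_mid m k1 k2 x).sin).const_mul C).deriv]; ring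

/-- For the `β = 0` linearized system, the dispersion relation `(c − fa)² = (a²+b²)ρ̄f`
always admits a real root, hence nontrivial planar standing waves exist for every
frequency `(a, b) ≠ (0, 0)`. -/
theorem planar_waves_beta_zero (ρm ρb a b : ℝ) (hρm : 0 < ρm)
    (hρb0 : 0 < ρb) (hρbm : ρb < ρm) (f : ℝ) (hf : f = ρm - ρb)
    (hab : (a, b) ≠ (0, 0)) :
    (∃ c : ℝ, (c - f*a)^2 = (a^2 + b^2) * ρb * f)
    ∧ ∃ A B c : ℝ, A * B ≠ 0 ∧ ∀ x y t : ℝ,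
      (deriv (fun t' => A * Real.cos (a*x + b*y + c*t')) t
        = f * deriv (fun x' => A * Real.cos (a*x' + b*y + c*t)) x
          + ρb *
            (deriv (fun x' => deriv (fun x'' => B * Real.sin (a*x'' + b*y + c*t)) x') x
             + deriv (fun y' => deriv (fun y'' => B * Real.sin (a*x + b*y'' + c*t)) y') y))
      ∧ (deriv (fun t' => B * Real.sin (a*x + b*y + c*t')) t
        = f * deriv (fun x' => B * Real.sin (a*x' + b*y + c*t)) x
          + f * (A * Real.cos (a*x + b*y + c*t))) := by
  have hf0 : 0 < f := by rw [hf]; linarith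
  have hab2 : 0 < a^2 + b^2 := by
    have h : a ≠ 0 ∨ b ≠ 0 := by
      by_contra h
      push_neg at h
      exact hab (by simp [h.1, h.2])
    rcases h with h | h
    · positivity
    · positivity
  have hD : 0 < (a^2 + b^2) * ρb * f := by positivity
  set s := Real.sqrt ((a^2 + b^2) * ρb * f) with hs
  have hs0 : 0 < s := Real.sqrt_pos.mpr hD
  have hs2 : s^2 = (a^2 + b^2) * ρb * f := Real.sq_sqrt hD.le
  set c := f*a + s with hc
  refine ⟨⟨c, by rw [hc]; ring_nf; linarith [hs2]⟩, s/f, 1, c, ?_, ?_⟩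
  · have : s/f ≠ 0 := div_ne_zero hs0.ne' hf0.ne'
    simpa using this
  · intro x y t
    have h1 : (s/f)*c - f*((s/f)*a) - ρb*(1*a*a + 1*b*b) = 0 := by
      field_simp
      nlinarith [hs2]
    have h2 : 1*c - f*(1*a) - f*(s/f) = 0 := by
      field_simp
      ring
    constructor
    · simp only [dcos_last, dcos_first, dsin_first, dsin_mid, dcos_mid]
      linear_combination (-Real.sin (a*x + b*y + c*t)) * h1
    · simp only [dsin_last, dsin_first]
      linear_combination (Real.cos (a*x + b*y + c*t)) * h2
end

section
/- Let ρm > 0, 0 < ρ̄ < ρm/2, f = ρm − ρ̄, σ > 0, and θ_σ(ξ)² := 4(f ρ̄ |ξ|² − (ρ̄ ξ₁ − iσ|ξ|²)²) for ξ ∈ ℝ². Then Re(θ_σ(ξ)²)/4 = f ρ̄ |ξ|² − ρ̄² ξ₁² + σ² |ξ|⁴ and Im(θ_σ(ξ)²)/4 = 2σρ̄ξ₁|ξ|², and there exists c > 0 such that the principal square root θ_σ(ξ) satisfies Re(θ_σ(ξ)) ≥ c(|ξ| + σ|ξ|²) and Re(θ_σ(ξ)) ≤ (1/c)(|ξ|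 + σ|ξ|²) for all ξ ∈ ℝ². -/
open Complex

lemma re_cpow_half' (z : ℂ) (hz : z ≠ 0) :
    (z ^ ((1:ℂ)/2)).re = Real.sqrt ((‖z‖ + z.re) / 2) := by
  set w := z ^ ((1:ℂ)/2) with hw
  have h2 : w ^ 2 = z := by
    rw [hw, show (1:ℂ)/2 = (((2:ℕ):ℂ))⁻¹ by norm_num]
    exact Complex.cpow_nat_inv_pow z two_ne_zero
  have habs : ‖z‖ = w.re ^ 2 + w.im ^ 2 := by
    rw [← h2, norm_pow, Complex.sq_norm, Complex.normSq_apply]; ring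
  have hre : z.re = w.re ^ 2 - w.im ^ 2 := by
    rw [← h2]; simp [pow_two, Complex.mul_re]
  have hwre : 0 ≤ w.re := by
    rw [hw, Complex.cpow_def_of_ne_zero hz, Complex.exp_re]
    apply mul_nonneg (Real.exp_pos _).le
    have him : (Complex.log z * ((1:ℂ)/2)).im = z.arg / 2 := by
      simp [Complex.mul_im, Complex.log_im]; ring
    rw [him]
    apply Real.cos_nonneg_of_mem_Icc
    constructor
    · have := Complex.neg_pi_lt_arg z; linarith
    · have := Complex.arg_le_pi z; linarith
  have hkey : (‖z‖ + z.re) / 2 = w.re ^ 2 := by rw [habs, hre]; ring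
  rw [hkey, Real.sqrt_sq hwre]

lemma sqrt_add_le'' (a b : ℝ) (ha : 0 ≤ a) (hb : 0 ≤ b) :
    Real.sqrt (a + b) ≤ Real.sqrt a + Real.sqrt b := by
  nlinarith [Real.sq_sqrt ha, Real.sq_sqrt hb, Real.sq_sqrt (add_nonneg ha hb),
    Real.sqrt_nonneg a, Real.sqrt_nonneg b, Real.sqrt_nonneg (a+b),
    mul_nonneg (Real.sqrt_nonneg a) (Real.sqrt_nonneg b)]

lemma add_sqrt_le'' (a b : ℝ) (ha : 0 ≤ a) (hb : 0 ≤ b) :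
    Real.sqrt a + Real.sqrt b ≤ 2 * Real.sqrt (a + b) := by
  have h1 : Real.sqrt a ≤ Real.sqrt (a + b) := Real.sqrt_le_sqrt (by linarith)
  have h2 : Real.sqrt b ≤ Real.sqrt (a + b) := Real.sqrt_le_sqrt (by linarith)
  linarith

set_option maxHeartbeats 1000000 in
/-- Real and imaginary parts of `θ_σ(ξ)²/4` and two-sided bounds on the real part of
the principal square root `θ_σ(ξ)` in the viscous case. -/
theorem viscous_theta_bounds (ρm ρb σ : ℝ) (hρm : 0 < ρm)
    (hρb0 : 0 < ρb) (hρbm : ρb < ρm / 2) (f : ℝ) (hf : f = ρm - ρb)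
    (hσ : 0 < σ) :
    let z : ℝ → ℝ → ℂ := fun ξ1 ξ2 =>
      (f : ℂ) * ρb * ((ξ1:ℂ)^2 + (ξ2:ℂ)^2)
        - ((ρb : ℂ) * ξ1 - Complex.I * σ * ((ξ1:ℂ)^2 + (ξ2:ℂ)^2))^2
    let θσ : ℝ → ℝ → ℂ := fun ξ1 ξ2 => 2 * (z ξ1 ξ2) ^ ((1:ℂ)/2)
    (∀ ξ1 ξ2 : ℝ,
        ((4 : ℂ) * z ξ1 ξ2).re / 4
            = f * ρb * (ξ1^2 + ξ2^2) - ρb^2 * ξ1^2 + σ^2 * (ξ1^2 + ξ2^2)^2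
        ∧ ((4 : ℂ) * z ξ1 ξ2).im / 4 = 2 * σ * ρb * ξ1 * (ξ1^2 + ξ2^2))
    ∧ ∃ c > 0, ∀ ξ1 ξ2 : ℝ,
        c * (Real.sqrt (ξ1^2 + ξ2^2) + σ * (ξ1^2 + ξ2^2)) ≤ (θσ ξ1 ξ2).re
        ∧ (θσ ξ1 ξ2).re ≤ (1/c) * (Real.sqrt (ξ1^2 + ξ2^2) + σ * (ξ1^2 + ξ2^2)) := by
  intro z θσ
  have hf0 : 0 < f := by rw [hf]; linarith
  -- decomposition of z into real and imaginary parts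
  have hzdec : ∀ ξ1 ξ2 : ℝ, z ξ1 ξ2 =
      Complex.ofReal (f*ρb*(ξ1^2+ξ2^2) - ρb^2*ξ1^2 + σ^2*(ξ1^2+ξ2^2)^2)
        + Complex.ofReal (2*σ*ρb*ξ1*(ξ1^2+ξ2^2)) * Complex.I := by
    intro ξ1 ξ2
    simp only [z]
    push_cast
    ring_nf
    simp [Complex.I_sq]
  have hzre : ∀ ξ1 ξ2 : ℝ, (z ξ1 ξ2).re
      = f*ρb*(ξ1^2+ξ2^2) - ρb^2*ξ1^2 + σ^2*(ξ1^2+ξ2^2)^2 := by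
    intro ξ1 ξ2; rw [hzdec]
    simp only [Complex.add_re, Complex.ofReal_re, Complex.mul_re, Complex.ofReal_im,
      Complex.I_re, Complex.I_im, mul_zero, zero_mul, sub_zero, add_zero]
  have hzim : ∀ ξ1 ξ2 : ℝ, (z ξ1 ξ2).im = 2*σ*ρb*ξ1*(ξ1^2+ξ2^2) := by
    intro ξ1 ξ2; rw [hzdec]
    simp only [Complex.add_im, Complex.ofReal_im, Complex.mul_im, Complex.ofReal_re,
      Complex.I_re, Complex.I_im, mul_zero, zero_mul, mul_one, add_zero, zero_add]
  constructor
  · intro ξ1 ξ2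
    constructor
    · rw [Complex.mul_re, hzre, hzim]
      simp only [Complex.re_ofNat, Complex.im_ofNat, zero_mul, sub_zero]
      ring
    · rw [Complex.mul_im, hzre, hzim]
      simp only [Complex.re_ofNat, Complex.im_ofNat, zero_mul, add_zero]
      ring
  · -- the bounds
    set c0 : ℝ := ρb * (ρm - 2*ρb) with hc0
    have hc0pos : 0 < c0 := by
      apply mul_pos hρb0; linarith
    set K : ℝ := f*ρb + ρb + 1 with hK
    have hKpos : 0 < K := by positivity
    have hsK : 0 < Real.sqrt K := Real.sqrt_pos.mpr hKpos
    set c : ℝ := min (min (Real.sqrt c0) 1) (1/(2*Real.sqrt K)) with hc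
    have hcpos : 0 < c := by
      apply lt_min (lt_min (Real.sqrt_pos.mpr hc0pos) one_pos)
      positivity
    refine ⟨c, hcpos, ?_⟩
    intro ξ1 ξ2
    set r : ℝ := ξ1^2 + ξ2^2 with hr
    have hrnn : 0 ≤ r := by positivity
    set s : ℝ := Real.sqrt r with hs
    have hsnn : 0 ≤ s := Real.sqrt_nonneg r
    have hs2 : s^2 = r := Real.sq_sqrt hrnn
    set t : ℝ := σ * r with ht
    have htnn : 0 ≤ t := by positivity
    rcases eq_or_ne r 0 with hr0 | hr0
    · -- degenerate case ξ = 0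
      have hξ1 : ξ1 = 0 := by nlinarith [sq_nonneg ξ1, sq_nonneg ξ2]
      have hξ2 : ξ2 = 0 := by nlinarith [sq_nonneg ξ1, sq_nonneg ξ2]
      have hz0 : z ξ1 ξ2 = 0 := by
        rw [hzdec, hξ1, hξ2]; norm_num
      have hθ0 : (θσ ξ1 ξ2).re = 0 := by
        simp only [θσ, hz0]
        rw [Complex.zero_cpow (by norm_num : (1:ℂ)/2 ≠ 0)]
        simp
      rw [hθ0]
      have hs0 : s = 0 := by rw [hs, hr0, Real.sqrt_zero]
      have ht0 : t = 0 := by rw [ht, hr0]; ring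
      rw [hs0, ht0]
      norm_num
    · have hrpos : 0 < r := lt_of_le_of_ne hrnn (Ne.symm hr0)
      -- real part bounds for z
      have hξ1r : ξ1^2 ≤ r := by nlinarith [sq_nonneg ξ2]
      have hrelb : c0 * r + t^2 ≤ (z ξ1 ξ2).re := by
        rw [hzre, ← hr, hc0, ht, hf]
        nlinarith [hξ1r, hρb0.le]
      have hrepos : 0 < (z ξ1 ξ2).re := by
        have : 0 < c0 * r + t^2 := by positivity
        linarith
      have hzne : z ξ1 ξ2 ≠ 0 := by
        intro h; rw [h] at hrepos; simp at hrepos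
      -- |ξ1| ≤ s
      have hξ1s : |ξ1| ≤ s := by
        rw [hs]
        apply Real.abs_le_sqrt hξ1r
      -- θσ real part formula
      have hθre : (θσ ξ1 ξ2).re
          = 2 * Real.sqrt ((‖z ξ1 ξ2‖ + (z ξ1 ξ2).re) / 2) := by
        simp only [θσ, Complex.mul_re]
        rw [re_cpow_half' _ hzne]
        norm_num
      have hrele : (z ξ1 ξ2).re ≤ ‖z ξ1 ξ2‖ := Complex.re_le_norm _
      constructor
      · -- lower bound
        have h1 : Real.sqrt ((z ξ1 ξ2).re) ≤
            Real.sqrt ((‖z ξ1 ξ2‖ + (z ξ1 ξ2).re) / 2) := by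
          apply Real.sqrt_le_sqrt; linarith
        have h2 : Real.sqrt (c0 * r + t^2) ≤ Real.sqrt ((z ξ1 ξ2).re) :=
          Real.sqrt_le_sqrt hrelb
        have h3 : Real.sqrt (c0 * r) + Real.sqrt (t^2) ≤ 2 * Real.sqrt (c0 * r + t^2) :=
          add_sqrt_le'' _ _ (by positivity) (by positivity)
        have h4 : Real.sqrt (c0 * r) = Real.sqrt c0 * s := by
          rw [hs, Real.sqrt_mul hc0pos.le]
        have h5 : Real.sqrt (t^2) = t := Real.sqrt_sq htnn
        have h6 : c * (s + t) ≤ Real.sqrt c0 * s + t := by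
          have hca : c ≤ Real.sqrt c0 := le_trans (min_le_left _ _) (min_le_left _ _)
          have hcb : c ≤ 1 := le_trans (min_le_left _ _) (min_le_right _ _)
          nlinarith
        calc c * (Real.sqrt (ξ1^2 + ξ2^2) + σ * (ξ1^2 + ξ2^2))
            = c * (s + t) := by rw [hs, hr, ht]
          _ ≤ Real.sqrt c0 * s + t := h6
          _ = Real.sqrt (c0 * r) + Real.sqrt (t^2) := by rw [h4, h5]
          _ ≤ 2 * Real.sqrt (c0 * r + t^2) := h3
          _ ≤ 2 * Real.sqrt ((z ξ1 ξ2).re) := by linarith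
          _ ≤ 2 * Real.sqrt ((‖z ξ1 ξ2‖ + (z ξ1 ξ2).re) / 2) := by linarith
          _ = (θσ ξ1 ξ2).re := hθre.symm
      · -- upper bound
        have habsub : ‖z ξ1 ξ2‖ ≤ K * (r + t^2) := by
          have h := Complex.norm_le_abs_re_add_abs_im (z ξ1 ξ2)
          have hre' : |(z ξ1 ξ2).re| = (z ξ1 ξ2).re := abs_of_pos hrepos
          have him' : |(z ξ1 ξ2).im| ≤ ρb * (r + t^2) := by
            rw [hzim, ← hr]
            have : |2*σ*ρb*ξ1*r| = 2*σ*ρb*r*|ξ1| := by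
              rw [show 2*σ*ρb*ξ1*r = (2*σ*ρb*r)*ξ1 by ring, abs_mul,
                _root_.abs_of_nonneg (by positivity : (0:ℝ) ≤ 2*σ*ρb*r)]
            rw [this]
            have h2st : 2*σ*ρb*r*|ξ1| ≤ 2*ρb*(s*t) := by
              have : 2*σ*ρb*r*|ξ1| ≤ 2*σ*ρb*r*s := by
                apply mul_le_mul_of_nonneg_left hξ1s (by positivity)
              calc 2*σ*ρb*r*|ξ1| ≤ 2*σ*ρb*r*s := this
                _ = 2*ρb*(s*t) := by rw [ht]; ring
            have hst : 2*(s*t) ≤ s^2 + t^2 := by nlinarith [sq_nonneg (s - t)]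
            rw [hs2] at hst
            nlinarith [hρb0.le]
          have hreu : (z ξ1 ξ2).re ≤ f*ρb*r + t^2 := by
            rw [hzre, ← hr, ht]
            nlinarith [sq_nonneg ξ1, hρb0.le]
          rw [hK]
          calc ‖z ξ1 ξ2‖ ≤ |(z ξ1 ξ2).re| + |(z ξ1 ξ2).im| := h
            _ ≤ (f*ρb*r + t^2) + ρb * (r + t^2) := by rw [hre']; linarith
            _ ≤ (f*ρb + ρb + 1) * (r + t^2) := by nlinarith [mul_nonneg (mul_nonneg hf0.le hρb0.le) (sq_nonneg t), hrnn]
        have h1 : Real.sqrt ((‖z ξ1 ξ2‖ + (z ξ1 ξ2).re) / 2)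
            ≤ Real.sqrt (‖z ξ1 ξ2‖) := by
          apply Real.sqrt_le_sqrt; linarith
        have h2 : Real.sqrt (‖z ξ1 ξ2‖) ≤ Real.sqrt K * Real.sqrt (r + t^2) := by
          rw [← Real.sqrt_mul hKpos.le]
          exact Real.sqrt_le_sqrt habsub
        have h3 : Real.sqrt (r + t^2) ≤ s + t := by
          have := sqrt_add_le'' r (t^2) hrnn (by positivity)
          rw [← hs, Real.sqrt_sq htnn] at this
          exact this
        have hcK : 2 * Real.sqrt K ≤ 1 / c := by
          have hcc : c ≤ 1/(2*Real.sqrt K) := min_le_right _ _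
          rw [le_div_iff₀ hcpos]
          calc 2 * Real.sqrt K * c ≤ 2 * Real.sqrt K * (1/(2*Real.sqrt K)) := by
                apply mul_le_mul_of_nonneg_left hcc (by positivity)
            _ = 1 := by field_simp
        calc (θσ ξ1 ξ2).re
            = 2 * Real.sqrt ((‖z ξ1 ξ2‖ + (z ξ1 ξ2).re) / 2) := hθre
          _ ≤ 2 * (Real.sqrt K * Real.sqrt (r + t^2)) := by
              have := le_trans h1 h2; linarith
          _ ≤ 2 * (Real.sqrt K * (s + t)) := by
              apply mul_le_mul_of_nonneg_left _ (by norm_num)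
              exact mul_le_mul_of_nonneg_left h3 hsK.le
          _ = (2 * Real.sqrt K) * (s + t) := by ring
          _ ≤ (1/c) * (s + t) := by
              apply mul_le_mul_of_nonneg_right hcK (by positivity)
          _ = (1/c) * (Real.sqrt (ξ1^2 + ξ2^2) + σ * (ξ1^2 + ξ2^2)) := by rw [hs, hr, ht]
end
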